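/- arXiv:0908.3456 — 7 statements merged into one kernel-verified Lean document; each statement's English description precedes it below -/
import Mathlib

section
/- Let 𝒦 be a closure system on a finite set E, let X ⊆ E and let e ∈ X. Then e ∈ ex(X) if and only if there exists no rooted circuit (A, e) of 𝒦 with A ⊆ X. -/
open Set

variable {α : Type*}

/-- A closure system on a ground set `E`: a family of subsets of `E` containing `E`
and closed under pairwise intersection. -/
def IsClosureSystem (E : Set α) (K : Set (Set α)) : Prop :=
  (∀ A ∈ K, A ⊆ E) ∧ E ∈ K ∧ ∀ A ∈ K, ∀ B ∈ K, A ∩ B ∈ K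

/-- The closure operator `τ(X) = ⋂ {A ∈ K : X ⊆ A}`. -/
def closureOp (K : Set (Set α)) (X : Set α) : Set α :=
  ⋂₀ {A | A ∈ K ∧ X ⊆ A}

/-- The extreme operator `ex(X) = {x ∈ X : x ∉ τ(X \ {x})}`. -/
def extremeOp (K : Set (Set α)) (X : Set α) : Set α :=
  {x | x ∈ X ∧ x ∉ closureOp K (X \ {x})}

/-- A rooted circuit `(X, e)` of a closure system `K` on ground set `E`:
`e ∉ X` and `X` is minimal under inclusion with `e ∈ τ(X)`. -/
def IsRootedCircuit (E : Set α) (K : Set (Set α)) (X : Set α) (e : α) : Prop :=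
  X ⊆ E ∧ e ∈ E ∧ e ∉ X ∧ e ∈ closureOp K X ∧
    ∀ Y ⊆ X, e ∈ closureOp K Y → Y = X

/-- A convex geometry: a closure system in which every nonempty closed set has a
nonempty extreme set. -/
def IsConvexGeometry (E : Set α) (K : Set (Set α)) : Prop :=
  IsClosureSystem E K ∧ ∀ X ∈ K, X.Nonempty → (extremeOp K X).Nonempty

/-- A convex geometry has stem size 2 if every rooted circuit has stem of size 2. -/
def StemSize2 (E : Set α) (K : Set (Set α)) : Prop :=
  ∀ X e, IsRootedCircuit E K X e → X.ncard = 2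

theorem closureOp_mono (K : Set (Set α)) {Y Z : Set α} (hYZ : Y ⊆ Z) :
    closureOp K Y ⊆ closureOp K Z :=
  sInter_subset_sInter fun _ hA => ⟨hA.1, hYZ.trans hA.2⟩

theorem exists_isRootedCircuit_subset {E : Set α} {K : Set (Set α)} {Y : Set α} {e : α}
    (hY : Y.Finite) (hYE : Y ⊆ E) (heE : e ∈ E) (heY : e ∉ Y) (he : e ∈ closureOp K Y) :
    ∃ A ⊆ Y, IsRootedCircuit E K A e := by
  have hfin : Set.Finite {A | A ⊆ Y ∧ e ∈ closureOp K A} :=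
    hY.finite_subsets.subset fun _ hA => hA.1
  obtain ⟨A, -, hAmin⟩ := hfin.exists_le_minimal ⟨subset_rfl, he⟩
  obtain ⟨hAY, heA⟩ := hAmin.prop
  exact ⟨A, hAY, hAY.trans hYE, heE, fun h => heY (hAY h), heA,
    fun B hBA heB => hAmin.eq_of_le ⟨hBA.trans hAY, heB⟩ hBA⟩

theorem stmt0_general (E : Set α) (hE : E.Finite) (K : Set (Set α))
    (X : Set α) (hX : X ⊆ E) (e : α) (he : e ∈ X) :
    e ∈ extremeOp K X ↔ ¬ ∃ A : Set α, A ⊆ X ∧ IsRootedCircuit E K A e := by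
  constructor
  · rintro ⟨-, he_not⟩ ⟨A, hAX, -, -, heA, heτA, -⟩
    exact he_not (closureOp_mono K (subset_sdiff_singleton hAX heA) heτA)
  · intro hno
    refine ⟨he, fun heτ => hno ?_⟩
    obtain ⟨A, hAX, hA⟩ := exists_isRootedCircuit_subset (Y := X \ {e})
      ((hE.subset hX).sdiff) (sdiff_subset.trans hX) (hX he) (fun h => h.2 rfl) heτ
    exact ⟨A, hAX.trans sdiff_subset, hA⟩

theorem stmt0 (E : Set α) (hE : E.Finite) (K : Set (Set α))
    (hK : IsClosureSystem E K) (X : Set α) (hX : X ⊆ E) (e : α) (he : e ∈ X) :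
    e ∈ extremeOp K X ↔ ¬ ∃ A : Set α, A ⊆ X ∧ IsRootedCircuit E K A e :=
  stmt0_general E hE K X hX e he
end

section
/- Let 𝒦 be a convex geometry of stem size 2 on a finite set E with rooted circuits 𝒞, and let x, y, z, u, v ∈ E be pairwise distinct. If ({x,y}, z) ∈ 𝒞 and ({v,z}, u) ∈ 𝒞, then ({x,v}, u) ∈ 𝒞, ({y,v}, u) ∈ 𝒞, or ({x,y}, u) ∈ 𝒞. -/
/-!
By transitivity of the closure, `z ∈ τ{x, y}` and `u ∈ τ{v, z}` give `u ∈ τ{x, y, v}`, so some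
subset of `{x, y, v}` is the stem of a rooted circuit with root `u`. That stem has two elements,
hence is one of `{x, v}`, `{y, v}`, `{x, y}`.
-/

open Set

variable {α : Type*}

section ClosureOp

variable {K : Set (Set α)} {X Y : Set α}

lemma subset_closureOp : X ⊆ closureOp K X :=
  fun _ he _ hA => hA.2 he

lemma closureOp_mono_s3 (hXY : X ⊆ Y) : closureOp K X ⊆ closureOp K Y :=
  fun _ he A hA => he A ⟨hA.1, hXY.trans hA.2⟩

lemma closureOp_subset_of_subset_closureOp (hXY : X ⊆ closureOp K Y) :
    closureOp K X ⊆ closureOp K Y :=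
  fun _ he A hA => he A ⟨hA.1, fun _ hw => hXY hw A hA⟩

end ClosureOp

lemma exists_isRootedCircuit_subset_s3 {E : Set α} {K : Set (Set α)} {S : Set α} {e : α}
    (hS : S.Finite) (hSE : S ⊆ E) (he : e ∈ E) (heS : e ∉ S) (heτ : e ∈ closureOp K S) :
    ∃ Y ⊆ S, IsRootedCircuit E K Y e := by
  have hfin : {Y | Y ⊆ S ∧ e ∈ closureOp K Y}.Finite :=
    hS.finite_subsets.subset fun _ hY => hY.1
  obtain ⟨Y, hYmin⟩ := hfin.exists_minimal ⟨S, subset_rfl, heτ⟩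
  obtain ⟨hYS, heY⟩ := hYmin.prop
  refine ⟨Y, hYS, hYS.trans hSE, he, fun h => heS (hYS h), heY, fun Y' hY'Y heY' => ?_⟩
  exact hYmin.eq_of_le ⟨hY'Y.trans hYS, heY'⟩ hY'Y

lemma eq_pair_of_subset_triple_of_ncard_eq_two {a b c : α} {Y : Set α}
    (hY : Y ⊆ {a, b, c}) (hcard : Y.ncard = 2) : Y = {a, b} ∨ Y = {a, c} ∨ Y = {b, c} := by
  obtain ⟨p, q, hpq, rfl⟩ := ncard_eq_two.1 hcard
  have hp : p ∈ ({a, b, c} : Set α) := hY (by simp)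
  have hq : q ∈ ({a, b, c} : Set α) := hY (by simp)
  simp only [mem_insert_iff, mem_singleton_iff] at hp hq
  rcases hp with rfl | rfl | rfl <;> rcases hq with rfl | rfl | rfl <;> simp_all [pair_comm]

theorem stmt3_general (E : Set α) (K : Set (Set α)) (h2 : StemSize2 E K)
    (x y z u v : α) (hxu : x ≠ u) (hyu : y ≠ u)
    (h1 : IsRootedCircuit E K {x, y} z) (h2' : IsRootedCircuit E K {v, z} u) :
    IsRootedCircuit E K {x, v} u ∨ IsRootedCircuit E K {y, v} u ∨
      IsRootedCircuit E K {x, y} u := by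
  obtain ⟨hxyE, -, -, hzτ, -⟩ := h1
  obtain ⟨hvzE, huE, huvz, huτ, -⟩ := h2'
  have hvz : {v, z} ⊆ closureOp K {x, y, v} := by
    refine insert_subset (subset_closureOp (by simp)) (singleton_subset_iff.2 ?_)
    exact closureOp_mono_s3 (by grind) hzτ
  have huS : u ∉ ({x, y, v} : Set α) := by
    simp only [mem_insert_iff, mem_singleton_iff, not_or]
    exact ⟨hxu.symm, hyu.symm, fun h => huvz (by simp [h])⟩
  have hSE : {x, y, v} ⊆ E :=
    insert_subset (hxyE (by simp)) (pair_subset (hxyE (by simp)) (hvzE (by simp)))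
  obtain ⟨Y, hYS, hY⟩ := exists_isRootedCircuit_subset_s3 (toFinite _) hSE huE huS
    (closureOp_subset_of_subset_closureOp hvz huτ)
  rcases eq_pair_of_subset_triple_of_ncard_eq_two hYS (h2 Y u hY) with rfl | rfl | rfl
  · exact Or.inr (Or.inr hY)
  · exact Or.inl hY
  · exact Or.inr (Or.inl hY)

theorem stmt3 (E : Set α) (hE : E.Finite) (K : Set (Set α))
    (hK : IsConvexGeometry E K) (h2 : StemSize2 E K)
    (x y z u v : α) (hx : x ∈ E) (hy : y ∈ E) (hz : z ∈ E) (hu : u ∈ E) (hv : v ∈ E)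
    (hxy : x ≠ y) (hxz : x ≠ z) (hxu : x ≠ u) (hxv : x ≠ v)
    (hyz : y ≠ z) (hyu : y ≠ u) (hyv : y ≠ v)
    (hzu : z ≠ u) (hzv : z ≠ v) (huv : u ≠ v)
    (h1 : IsRootedCircuit E K {x, y} z) (h2' : IsRootedCircuit E K {v, z} u) :
    IsRootedCircuit E K {x, v} u ∨ IsRootedCircuit E K {y, v} u ∨
      IsRootedCircuit E K {x, y} u :=
  stmt3_general E K h2 x y z u v hxu hyu h1 h2'
end

section
/- Let 𝒦 be a convex geometry of stem size 2 on a finite set E with rooted circuits 𝒞, and let x, y, z, u ∈ E be pairwise distinct. If ({x,y}, z) ∈ 𝒞 and ({x,z}, u) ∈ 𝒞, then ({x,y}, u) ∈ 𝒞. -/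
open Set

variable {α : Type*}

theorem stmt4 (E : Set α) (hE : E.Finite) (K : Set (Set α))
    (hK : IsConvexGeometry E K) (h2 : StemSize2 E K)
    (x y z u : α) (hx : x ∈ E) (hy : y ∈ E) (hz : z ∈ E) (hu : u ∈ E)
    (hxy : x ≠ y) (hxz : x ≠ z) (hxu : x ≠ u) (hyz : y ≠ z) (hyu : y ≠ u) (hzu : z ≠ u)
    (h1 : IsRootedCircuit E K {x, y} z) (h2' : IsRootedCircuit E K {x, z} u) :
    IsRootedCircuit E K {x, y} u := by
  have subset_cl : ∀ X : Set α, X ⊆ closureOp K X := by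
    intro X a ha A hA
    exact hA.2 ha
  have cl_trans : ∀ S T : Set α, S ⊆ closureOp K T →
      closureOp K S ⊆ closureOp K T := by
    intro S T hST a ha A hA
    exact ha A ⟨hA.1, fun s hs => hST hs A hA⟩
  obtain ⟨hXE1, _, hzX, hzcl, hmin1⟩ := h1
  obtain ⟨hXE2, _, huX, hucl, hmin2⟩ := h2'
  refine ⟨?_, hu, ?_, ?_, ?_⟩
  · intro a ha
    rcases ha with rfl | ha
    · exact hx
    · rw [mem_singleton_iff] at ha; subst ha; exact hy
  · rintro (rfl | h)
    · exact hxu rfl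
    · rw [mem_singleton_iff] at h; exact hyu h.symm
  · -- u ∈ τ({x, y})
    refine cl_trans {x, z} {x, y} ?_ hucl
    rintro a (rfl | ha)
    · exact subset_cl _ (by simp)
    · rw [mem_singleton_iff] at ha; subst ha; exact hzcl
  · intro Y hY huY
    by_cases hxY : x ∈ Y
    · by_cases hyY : y ∈ Y
      · apply Subset.antisymm hY
        rintro a (rfl | ha)
        · exact hxY
        · rw [mem_singleton_iff] at ha; subst ha; exact hyY
      · -- Y ⊆ {x} ⊆ {x, z}
        have hYx : Y ⊆ {x} := by
          intro a ha
          rcases hY ha with h | h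
          · exact h
          · rw [mem_singleton_iff] at h; subst h; exact absurd ha hyY
        have := hmin2 Y (hYx.trans (by intro a ha; exact Or.inl ha)) huY
        exfalso
        have : z ∈ Y := this ▸ (by simp : z ∈ ({x, z} : Set α))
        have := hYx this
        rw [mem_singleton_iff] at this
        exact hxz this.symm
    · -- x ∉ Y, so Y ⊆ {y}
      exfalso
      have hYy : Y ⊆ {y} := by
        intro a ha
        rcases hY ha with h | h
        · subst h; exact absurd ha hxY
        · exact h
      have huy : u ∈ closureOp K {y} :=
        cl_trans Y {y} (hYy.trans (subset_cl {y})) huY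
      have hcirc : IsRootedCircuit E K {y} u := by
        refine ⟨by rintro a ha; rw [mem_singleton_iff] at ha; subst ha; exact hy,
          hu, ?_, huy, ?_⟩
        · rw [mem_singleton_iff]; exact fun h => hyu h.symm
        · intro Y' hY' huY'
          by_cases hyY' : y ∈ Y'
          · refine Subset.antisymm hY' ?_
            intro a ha
            rw [mem_singleton_iff] at ha
            subst ha
            exact hyY'
          · have hY'e : Y' = ∅ := by
              ext a
              simp only [mem_empty_iff_false, iff_false]
              intro ha
              have := hY' ha
              rw [mem_singleton_iff] at this; subst this; exact hyY' ha
            subst hY'e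
            have h0 := hmin2 ∅ (empty_subset _) huY'
            have : x ∈ (∅ : Set α) := h0 ▸ (by simp : x ∈ ({x, z} : Set α))
            exact absurd this (notMem_empty x)
      have := h2 {y} u hcirc
      rw [Set.ncard_singleton] at this
      omega
end

section
/- Let T be a finite tree. Then the family of edge sets of subtrees of T is a convex geometry on the edge set E(T), and every rooted circuit (X, e) of this convex geometry satisfies |X| = 2. -/
open Set

variable {α : Type*}

/-- `F` is the edge set of a subtree (connected subgraph) of `G`, where the empty
set is included. -/
def IsSubtreeEdgeSet {V : Type*} (G : SimpleGraph V) (F : Set (Sym2 V)) : Prop :=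
  F = ∅ ∨ ∃ H : G.Subgraph, H.Connected ∧ H.edgeSet = F

/-- The edge-shelling convex geometry of a graph: the family of edge sets of subtrees. -/
def edgeShelling {V : Type*} (G : SimpleGraph V) : Set (Set (Sym2 V)) :=
  {F | IsSubtreeEdgeSet G F}

open SimpleGraph

/-!
Fix a root `r` of the tree. For a set `Y` of edges, the union of the tree paths from `r` to the
endpoints of `Y` is a subtree containing `Y`; when `r` is itself an endpoint of `Y`, every subtree
containing `Y` contains these paths, so this union is the closure of `Y`. This gives closure under
intersection at once. An edge of `X` at an endpoint farthest from `r` is the last edge of the path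
from `r` to that endpoint and cannot be recovered from the other edges, so it is extreme. If
`e ∈ τ(X)`, then rooting at an endpoint of some `g ∈ X` puts `e` on the path to an endpoint of
some `f ∈ X`, so `e ∈ τ{g, f}`; minimality gives `X = {g, f}`, and `g ≠ f` since a single edge is
already a subtree.
-/

lemma closureOp_subset_of_mem {K : Set (Set α)} {A X : Set α} (hA : A ∈ K) (hXA : X ⊆ A) :
    closureOp K X ⊆ A :=
  sInter_subset_of_mem ⟨hA, hXA⟩

namespace SimpleGraph

variable {V : Type*} {G : SimpleGraph V}

def endpoints (Y : Set (Sym2 V)) : Set V := {v | ∃ f ∈ Y, v ∈ f}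

lemma nonempty_endpoints {Y : Set (Sym2 V)} (hY : Y.Nonempty) : (endpoints Y).Nonempty :=
  let ⟨f, hf⟩ := hY
  ⟨f.out.1, f, hf, f.out_fst_mem⟩

lemma edgeShelling_subset_edgeSet {A : Set (Sym2 V)} (hA : A ∈ edgeShelling G) :
    A ⊆ G.edgeSet := by
  rcases hA with rfl | ⟨H, -, rfl⟩
  · exact empty_subset _
  · exact H.edgeSet_subset

lemma singleton_mem_edgeShelling {e : Sym2 V} (he : e ∈ G.edgeSet) :
    {e} ∈ edgeShelling G := by
  induction e using Sym2.ind with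
  | h u v => exact Or.inr ⟨G.subgraphOfAdj he, Subgraph.subgraphOfAdj_connected he,
      edgeSet_subgraphOfAdj he⟩

namespace IsTree

variable (hG : G.IsTree)
include hG

noncomputable def path (u v : V) : G.Walk u v :=
  (hG.existsUnique_path u v).exists.choose

lemma isPath_path (u v : V) : (hG.path u v).IsPath :=
  (hG.existsUnique_path u v).exists.choose_spec

lemma eq_path {u v : V} {p : G.Walk u v} (hp : p.IsPath) : p = hG.path u v :=
  (hG.existsUnique_path u v).unique hp (hG.isPath_path u v)

lemma edges_path_subset {u v : V} (p : G.Walk u v) : (hG.path u v).edges ⊆ p.edges := by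
  classical
  rw [← hG.eq_path p.bypass_isPath]
  exact p.edges_bypass_subset_edges

lemma edgeSet_path_subset {H : G.Subgraph} (hH : H.Connected) {a b : V} (ha : a ∈ H.verts)
    (hb : b ∈ H.verts) : (hG.path a b).edgeSet ⊆ H.edgeSet := by
  obtain ⟨p, hp⟩ := ((Subgraph.connected_iff_forall_exists_walk_subgraph H).mp hH).2 ha hb
  intro e he
  exact Subgraph.edgeSet_mono hp (by simpa using hG.edges_path_subset p he)

lemma eq_of_mem_support_path {r v w : V} (hv : v ∈ (hG.path r w).support)
    (hle : (hG.path r w).length ≤ (hG.path r v).length) : v = w := by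
  obtain ⟨p, q, hpq⟩ := Walk.mem_support_iff_exists_append.mp hv
  have hp : p = hG.path r v := hG.eq_path (hpq ▸ hG.isPath_path r w).of_append_left
  have hlen := congrArg Walk.length hpq
  rw [Walk.length_append, hp] at hlen
  exact Walk.eq_of_length_eq_zero (p := q) (by omega)

lemma mem_edges_path_or (r : V) {u v : V} (h : G.Adj u v) :
    s(u, v) ∈ (hG.path r u).edges ∨ s(u, v) ∈ (hG.path r v).edges := by
  classical
  by_cases hv : v ∈ (hG.path r u).support
  · left
    rw [hG.isAcyclic.path_concat (hG.isPath_path r v) (hG.isPath_path r u) h.symm hv,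
      Walk.edges_concat]
    simp [Sym2.eq_swap]
  · right
    have hu : u ∈ (hG.path r v).support :=
      hG.isAcyclic.mem_support_of_ne_mem_support_of_adj_of_isPath (hG.isPath_path r v)
        (hG.isPath_path r u) h.symm hv
    rw [hG.isAcyclic.path_concat (hG.isPath_path r u) (hG.isPath_path r v) h hu,
      Walk.edges_concat]
    simp

lemma exists_connected_edgeSet_eq (r : V) (S : Finset V) :
    ∃ H : G.Subgraph, H.Connected ∧ r ∈ H.verts ∧
      H.edgeSet = {e | ∃ v ∈ S, e ∈ (hG.path r v).edges} := by
  classical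
  induction S using Finset.induction_on with
  | empty => exact ⟨G.singletonSubgraph r, Subgraph.singletonSubgraph_connected, rfl, by simp⟩
  | insert v S _ ih =>
    obtain ⟨H, hH, hr, hE⟩ := ih
    refine ⟨H ⊔ (hG.path r v).toSubgraph,
      Subgraph.connected_sup hH.preconnected (hG.path r v).toSubgraph_connected.preconnected
        ⟨r, hr, by simp⟩, Or.inl hr, ?_⟩
    ext e
    simp [Subgraph.edgeSet_sup, hE, or_comm]

def hull (r : V) (Y : Set (Sym2 V)) : Set (Sym2 V) :=
  {e | ∃ v ∈ endpoints Y, e ∈ (hG.path r v).edges}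

lemma hull_mem_edgeShelling [Finite V] (r : V) (Y : Set (Sym2 V)) :
    hG.hull r Y ∈ edgeShelling G := by
  obtain ⟨H, hH, -, hE⟩ := hG.exists_connected_edgeSet_eq r (toFinite (endpoints Y)).toFinset
  exact Or.inr ⟨H, hH, by simp [hE, hull]⟩

lemma hull_subset_edgeSet (r : V) (Y : Set (Sym2 V)) : hG.hull r Y ⊆ G.edgeSet :=
  fun _ ⟨v, _, he⟩ ↦ (hG.path r v).edges_subset_edgeSet he

lemma subset_hull (r : V) {Y : Set (Sym2 V)} (hY : Y ⊆ G.edgeSet) : Y ⊆ hG.hull r Y := by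
  intro e he
  induction e using Sym2.ind with
  | h u v =>
    rcases hG.mem_edges_path_or r (hY he) with h | h
    exacts [⟨u, ⟨_, he, Sym2.mem_mk_left u v⟩, h⟩,
      ⟨v, ⟨_, he, Sym2.mem_mk_right u v⟩, h⟩]

lemma hull_subset_of_mem {r : V} {Y A : Set (Sym2 V)} (hr : r ∈ endpoints Y)
    (hA : A ∈ edgeShelling G) (hYA : Y ⊆ A) : hG.hull r Y ⊆ A := by
  rcases hA with rfl | ⟨H, hH, rfl⟩
  · obtain ⟨f, hf, -⟩ := hr
    exact absurd (hYA hf) (notMem_empty f)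
  · have hYH : endpoints Y ⊆ H.verts :=
      fun _ ⟨_, hf, hvf⟩ ↦ H.mem_verts_of_mem_edge (hYA hf) hvf
    rintro e ⟨v, hv, he⟩
    exact hG.edgeSet_path_subset hH (hYH hr) (hYH hv) he

lemma closureOp_subset_hull [Finite V] (r : V) {Y : Set (Sym2 V)} (hY : Y ⊆ G.edgeSet) :
    closureOp (edgeShelling G) Y ⊆ hG.hull r Y :=
  closureOp_subset_of_mem (hG.hull_mem_edgeShelling r Y) (hG.subset_hull r hY)

lemma hull_subset_closureOp {r : V} {Y : Set (Sym2 V)} (hr : r ∈ endpoints Y) :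
    hG.hull r Y ⊆ closureOp (edgeShelling G) Y :=
  fun _ he ↦ mem_sInter.mpr fun _ ⟨hA, hYA⟩ ↦ hG.hull_subset_of_mem hr hA hYA he

lemma isClosureSystem_edgeShelling [Finite V] : IsClosureSystem G.edgeSet (edgeShelling G) := by
  obtain ⟨r⟩ := hG.connected.nonempty
  refine ⟨fun _ ↦ edgeShelling_subset_edgeSet, ?_, fun A hA B hB ↦ ?_⟩
  · rw [← (hG.hull_subset_edgeSet r _).antisymm (hG.subset_hull r subset_rfl)]
    exact hG.hull_mem_edgeShelling r _
  · rcases (A ∩ B).eq_empty_or_nonempty with hAB | hAB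
    · exact Or.inl hAB
    obtain ⟨a, ha⟩ := nonempty_endpoints hAB
    have hhull : hG.hull a (A ∩ B) ⊆ A ∩ B := subset_inter
      (hG.hull_subset_of_mem ha hA inter_subset_left)
      (hG.hull_subset_of_mem ha hB inter_subset_right)
    have hE : A ∩ B ⊆ G.edgeSet := inter_subset_left.trans (edgeShelling_subset_edgeSet hA)
    rw [← hhull.antisymm (hG.subset_hull a hE)]
    exact hG.hull_mem_edgeShelling a _

lemma mem_edges_path_of_forall_length_le {r v : V} {X : Set (Sym2 V)} (hX : X ⊆ G.edgeSet)
    (hmax : ∀ w ∈ endpoints X, (hG.path r w).length ≤ (hG.path r v).length)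
    {g : Sym2 V} (hg : g ∈ X) (hvg : v ∈ g) : g ∈ (hG.path r v).edges := by
  obtain ⟨u, rfl⟩ := Sym2.mem_iff_exists.mp hvg
  refine (hG.mem_edges_path_or r (hX hg)).resolve_right fun h ↦ (hX hg).ne ?_
  exact hG.eq_of_mem_support_path ((hG.path r u).fst_mem_support_of_mem_edges h)
    (hmax u ⟨_, hg, Sym2.mem_mk_right v u⟩)

lemma extremeOp_nonempty [Finite V] {X : Set (Sym2 V)} (hX : X ⊆ G.edgeSet) (hne : X.Nonempty) :
    (extremeOp (edgeShelling G) X).Nonempty := by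
  obtain ⟨r⟩ := hG.connected.nonempty
  obtain ⟨v, ⟨f, hf, hvf⟩, hmax⟩ := (endpoints X).exists_max_image
    (fun w ↦ (hG.path r w).length) (toFinite _) (nonempty_endpoints hne)
  refine ⟨f, hf, fun hcl ↦ ?_⟩
  obtain ⟨w, ⟨g, ⟨hg, hgf⟩, hwg⟩, hfw⟩ :=
    hG.closureOp_subset_hull r (sdiff_subset.trans hX) hcl
  obtain rfl : v = w := hG.eq_of_mem_support_path (Walk.mem_support_of_mem_edges hfw hvf)
    (hmax w ⟨g, hg, hwg⟩)
  have hp := hG.isPath_path r v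
  obtain ⟨a, rfl⟩ := Sym2.mem_iff_exists.mp hvf
  obtain ⟨b, rfl⟩ := Sym2.mem_iff_exists.mp hwg
  refine hgf ?_
  rw [hp.eq_penultimate_of_mem_edges (hG.mem_edges_path_of_forall_length_le hX hmax hg hwg),
    hp.eq_penultimate_of_mem_edges hfw, mem_singleton_iff]

lemma ncard_eq_two_of_isRootedCircuit [Finite V] {X : Set (Sym2 V)} {e : Sym2 V}
    (h : IsRootedCircuit G.edgeSet (edgeShelling G) X e) : X.ncard = 2 := by
  obtain ⟨hXE, -, heX, hecl, hmin⟩ := h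
  have hne : X.Nonempty := nonempty_iff_ne_empty.mpr fun hX ↦
    notMem_empty e (closureOp_subset_of_mem (K := edgeShelling G) (Or.inl rfl) hX.subset hecl)
  obtain ⟨r, g, hg, hrg⟩ := nonempty_endpoints hne
  obtain ⟨w, ⟨f, hf, hwf⟩, hew⟩ := hG.closureOp_subset_hull r hXE hecl
  have hpair : e ∈ closureOp (edgeShelling G) {g, f} :=
    hG.hull_subset_closureOp ⟨g, mem_insert _ _, hrg⟩
      ⟨w, ⟨f, mem_insert_of_mem _ rfl, hwf⟩, hew⟩
  have hXpair : {g, f} = X := hmin _ (insert_subset hg (singleton_subset_iff.mpr hf)) hpair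
  have hgf : g ≠ f := by
    rintro rfl
    rw [pair_eq_singleton] at hXpair hpair
    exact heX (hXpair ▸
      closureOp_subset_of_mem (singleton_mem_edgeShelling (hXE hg)) subset_rfl hpair)
  rw [← hXpair, ncard_pair hgf]

end IsTree

end SimpleGraph

theorem stmt7_general {V : Type*} [Fintype V] (G : SimpleGraph V) (hG : G.IsTree) :
    IsConvexGeometry G.edgeSet (edgeShelling G) ∧
      ∀ (X : Set (Sym2 V)) (e : Sym2 V),
        IsRootedCircuit G.edgeSet (edgeShelling G) X e → X.ncard = 2 :=
  ⟨⟨hG.isClosureSystem_edgeShelling, fun _ hX hne ↦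
      hG.extremeOp_nonempty (edgeShelling_subset_edgeSet hX) hne⟩,
    fun _ _ ↦ hG.ncard_eq_two_of_isRootedCircuit⟩

theorem stmt7 {V : Type*} [Fintype V] [Nonempty V] (G : SimpleGraph V) (hG : G.IsTree) :
    IsConvexGeometry G.edgeSet (edgeShelling G) ∧
      ∀ (X : Set (Sym2 V)) (e : Sym2 V),
        IsRootedCircuit G.edgeSet (edgeShelling G) X e → X.ncard = 2 :=
  stmt7_general G hG
end

section
/- Let T be a finite tree and let 𝒞 be the set of rooted circuits of the edge-shelling convex geometry of T. For distinct edges x, y of T and an edge z with z ∉ {x, y}, one has ({x,y}, z) ∈ 𝒞 if and only if z lies on the path between x and y in T, i.e., there exists a path P in T whose first edge is x, whose last edge is y, and which contains z among its edges. -/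
open Set

variable {α : Type*}

/-!
In a tree, any two edges `x, y` are the first and last edges of a path `P`. The edge set of
`P` is a subtree, and every subtree containing `x` and `y` contains the unique path between
their vertices, hence all of `P`; so `τ({x, y})` is exactly the edge set of `P`. Minimality
of `{x, y}` is automatic because singletons, being edges, are subtrees and hence closed.
-/

lemma mem_closureOp_iff {K : Set (Set α)} {X : Set α} {e : α} :
    e ∈ closureOp K X ↔ ∀ A ∈ K, X ⊆ A → e ∈ A := by
  simp [closureOp, and_imp]

lemma closureOp_subset {K : Set (Set α)} {X A : Set α} (hA : A ∈ K) (hXA : X ⊆ A) :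
    closureOp K X ⊆ A :=
  Set.sInter_subset_of_mem ⟨hA, hXA⟩

lemma isRootedCircuit_pair_iff {E : Set α} {K : Set (Set α)} {x y z : α}
    (hx : {x} ∈ K) (hy : {y} ∈ K) :
    IsRootedCircuit E K {x, y} z ↔
      {x, y} ⊆ E ∧ z ∈ E ∧ z ∉ ({x, y} : Set α) ∧ z ∈ closureOp K {x, y} := by
  refine ⟨fun ⟨hE, hz, hzxy, hzc, _⟩ ↦ ⟨hE, hz, hzxy, hzc⟩,
    fun ⟨hE, hz, hzxy, hzc⟩ ↦ ⟨hE, hz, hzxy, hzc, fun Y hY hzY ↦ ?_⟩⟩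
  have hxY : x ∈ Y := by
    by_contra hxY
    have := closureOp_subset hy ((Set.subset_insert_iff_of_notMem hxY).mp hY) hzY
    simp_all
  have hyY : y ∈ Y := by
    by_contra hyY
    rw [Set.pair_comm] at hY
    have := closureOp_subset hx ((Set.subset_insert_iff_of_notMem hyY).mp hY) hzY
    simp_all
  exact hY.antisymm (Set.insert_subset hxY (Set.singleton_subset_iff.mpr hyY))

namespace SimpleGraph

variable {V : Type*} {G : SimpleGraph V}

namespace Walk

lemma start_mem_of_head?_edges_eq {a b : V} {p : G.Walk a b} {x : Sym2 V}
    (h : p.edges.head? = some x) : a ∈ x := by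
  cases p with
  | nil => simp at h
  | cons _ q =>
    rw [edges_cons, List.head?_cons, Option.some.injEq] at h
    exact h ▸ Sym2.mem_mk_left _ _

lemma end_mem_of_getLast?_edges_eq {a b : V} {p : G.Walk a b} {y : Sym2 V}
    (h : p.edges.getLast? = some y) : b ∈ y :=
  start_mem_of_head?_edges_eq (p := p.reverse) (by simpa [List.head?_reverse] using h)

lemma IsPath.head?_edges_eq_of_start_mem {a b : V} {p : G.Walk a b} (hp : p.IsPath)
    {x : Sym2 V} (hxp : x ∈ p.edges) (hax : a ∈ x) : p.edges.head? = some x := by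
  cases p with
  | nil => simp at hxp
  | cons h q =>
    rw [cons_isPath_iff] at hp
    rw [edges_cons, List.mem_cons] at hxp
    rcases hxp with rfl | hxq
    · rfl
    · obtain ⟨t, rfl⟩ := Sym2.mem_iff_exists.mp hax
      exact absurd (q.fst_mem_support_of_mem_edges hxq) hp.2

lemma IsPath.getLast?_edges_eq_of_end_mem {a b : V} {p : G.Walk a b} (hp : p.IsPath)
    {y : Sym2 V} (hyp : y ∈ p.edges) (hby : b ∈ y) : p.edges.getLast? = some y := by
  have h := hp.reverse.head?_edges_eq_of_start_mem (by simpa using hyp) hby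
  rwa [edges_reverse, List.head?_reverse] at h

lemma edgeSet_mem_edgeShelling {a b : V} (p : G.Walk a b) : p.edgeSet ∈ edgeShelling G :=
  Or.inr ⟨p.toSubgraph, p.toSubgraph_connected, p.edgeSet_toSubgraph⟩

end Walk

/-- If `v'` already lies on the path, acyclicity forces `s(v, v')` to be its last edge. -/
lemma IsAcyclic.exists_isPath_extend (hG : G.IsAcyclic) {c v v' : V} {p : G.Walk c v}
    (hp : p.IsPath) (h : G.Adj v v') :
    ∃ d ∈ s(v, v'), ∃ q : G.Walk c d,
      q.IsPath ∧ p.edges ⊆ q.edges ∧ s(v, v') ∈ q.edges := by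
  by_cases hv' : v' ∈ p.support
  · refine ⟨v, Sym2.mem_mk_left v v', p, hp, List.Subset.refl _, ?_⟩
    have hnil : ¬p.Nil := fun hn ↦ h.ne <| by
      have hv'c : v' = c := by simpa [Walk.nil_iff_support_eq.mp hn] using hv'
      exact (hv'c.trans hn.eq).symm
    rw [hG.eq_penultimate_of_adj_end hp h hv', Sym2.eq_swap]
    exact p.mk_penultimate_end_mem_edges hnil
  · exact ⟨v', Sym2.mem_mk_right v v', p.concat h, hp.concat hv' h,
      by simp [Walk.edges_concat], by simp [Walk.edges_concat]⟩

lemma IsTree.exists_isPath_head?_getLast? (hG : G.IsTree) {x y : Sym2 V}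
    (hx : x ∈ G.edgeSet) (hy : y ∈ G.edgeSet) :
    ∃ (a b : V) (p : G.Walk a b), p.IsPath ∧ p.edges.head? = some x ∧
      p.edges.getLast? = some y := by
  induction x using Sym2.ind with | _ u u' => ?_
  induction y using Sym2.ind with | _ v v' => ?_
  obtain ⟨p, hp, -⟩ := hG.existsUnique_path v u
  obtain ⟨a, ha, q, hq, -, hxq⟩ := hG.isAcyclic.exists_isPath_extend hp hx
  obtain ⟨b, hb, r, hr, hqr, hyr⟩ := hG.isAcyclic.exists_isPath_extend hq.reverse hy
  have hxr : s(u, u') ∈ r.edges := hqr (by simpa using hxq)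
  exact ⟨a, b, r, hr, hr.head?_edges_eq_of_start_mem hxr ha,
    hr.getLast?_edges_eq_of_end_mem hyr hb⟩

lemma IsAcyclic.toSubgraph_le_of_isPath (hG : G.IsAcyclic) {H : G.Subgraph}
    (hH : H.Preconnected) {a b : V} (ha : a ∈ H.verts) (hb : b ∈ H.verts) {p : G.Walk a b}
    (hp : p.IsPath) : p.toSubgraph ≤ H := by
  classical
  obtain ⟨w, hw⟩ := (Subgraph.preconnected_iff_forall_exists_walk_subgraph H).mp hH ha hb
  have hpw : p = w.bypass := congrArg Subtype.val <|
    (hG.subsingleton_path a b).elim ⟨p, hp⟩ ⟨w.bypass, w.bypass_isPath⟩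
  exact hpw ▸ Walk.toSubgraph_bypass_le_toSubgraph.trans hw

lemma IsTree.mem_closureOp_pair_iff (hG : G.IsTree) {x y z : Sym2 V}
    (hx : x ∈ G.edgeSet) (hy : y ∈ G.edgeSet) :
    z ∈ closureOp (edgeShelling G) {x, y} ↔
      ∃ (a b : V) (p : G.Walk a b), p.IsPath ∧ p.edges.head? = some x ∧
        p.edges.getLast? = some y ∧ z ∈ p.edges := by
  constructor
  · intro hz
    obtain ⟨a, b, p, hp, hhead, hlast⟩ := hG.exists_isPath_head?_getLast? hx hy
    have hxy : {x, y} ⊆ p.edgeSet := by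
      simp [Set.insert_subset_iff, Walk.edgeSet, List.mem_of_getLast? hlast,
        List.mem_of_mem_head? hhead]
    exact ⟨a, b, p, hp, hhead, hlast, closureOp_subset p.edgeSet_mem_edgeShelling hxy hz⟩
  · rintro ⟨a, b, p, hp, hhead, hlast, hzp⟩
    rw [mem_closureOp_iff]
    rintro A (rfl | ⟨H, hH, rfl⟩) hxyA
    · exact absurd (hxyA (Set.mem_insert x _)) (Set.notMem_empty x)
    have hxH : x ∈ H.edgeSet := hxyA (by simp)
    have hyH : y ∈ H.edgeSet := hxyA (by simp)
    have hpH := hG.isAcyclic.toSubgraph_le_of_isPath hH.preconnected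
      (H.mem_verts_of_mem_edge hxH (Walk.start_mem_of_head?_edges_eq hhead))
      (H.mem_verts_of_mem_edge hyH (Walk.end_mem_of_getLast?_edges_eq hlast)) hp
    exact Subgraph.edgeSet_mono hpH (p.mem_edges_toSubgraph.mpr hzp)

end SimpleGraph

lemma singleton_mem_edgeShelling {V : Type*} {G : SimpleGraph V} {e : Sym2 V}
    (he : e ∈ G.edgeSet) : ({e} : Set (Sym2 V)) ∈ edgeShelling G := by
  induction e using Sym2.ind with
  | _ u v => exact Or.inr ⟨G.subgraphOfAdj he, SimpleGraph.Subgraph.subgraphOfAdj_connected he,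
    G.edgeSet_subgraphOfAdj he⟩

theorem stmt8_general {V : Type*} (G : SimpleGraph V) (hG : G.IsTree)
    (x y z : Sym2 V) (hx : x ∈ G.edgeSet) (hy : y ∈ G.edgeSet) (hz : z ∈ G.edgeSet)
    (hzx : z ≠ x) (hzy : z ≠ y) :
    IsRootedCircuit G.edgeSet (edgeShelling G) {x, y} z ↔
      ∃ (a b : V) (p : G.Walk a b), p.IsPath ∧ p.edges.head? = some x ∧
        p.edges.getLast? = some y ∧ z ∈ p.edges := by
  rw [isRootedCircuit_pair_iff (singleton_mem_edgeShelling hx) (singleton_mem_edgeShelling hy),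
    hG.mem_closureOp_pair_iff hx hy]
  simp [Set.insert_subset_iff, hx, hy, hz, hzx, hzy]

theorem stmt8 {V : Type*} [Fintype V] [Nonempty V] (G : SimpleGraph V) (hG : G.IsTree)
    (x y z : Sym2 V) (hx : x ∈ G.edgeSet) (hy : y ∈ G.edgeSet) (hz : z ∈ G.edgeSet)
    (hxy : x ≠ y) (hzx : z ≠ x) (hzy : z ≠ y) :
    IsRootedCircuit G.edgeSet (edgeShelling G) {x, y} z ↔
      ∃ (a b : V) (p : G.Walk a b), p.IsPath ∧ p.edges.head? = some x ∧
        p.edges.getLast? = some y ∧ z ∈ p.edges :=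
  stmt8_general G hG x y z hx hy hz hzx hzy
end

section
/- Let T be a finite tree and let 𝒞 be the set of rooted circuits of its edge-shelling convex geometry. Then 𝒞 satisfies Rule Y: for any pairwise distinct edges x, y, z, u of T, if ({y,z}, u) ∈ 𝒞 then exactly one of ({x,y}, u) ∈ 𝒞 and ({x,z}, u) ∈ 𝒞 holds. -/
open Set

variable {α : Type*}

/-- Rule Y: for pairwise distinct `x y z u`, if `({y,z}, u)` is a rooted circuit then
exactly one of `({x,y}, u)` and `({x,z}, u)` is a rooted circuit. -/
def RuleY (E : Set α) (K : Set (Set α)) : Prop :=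
  ∀ x y z u : α, x ∈ E → y ∈ E → z ∈ E → u ∈ E →
    x ≠ y → x ≠ z → x ≠ u → y ≠ z → y ≠ u → z ≠ u →
    IsRootedCircuit E K {y, z} u →
    Xor' (IsRootedCircuit E K {x, y} u) (IsRootedCircuit E K {x, z} u)

/-!
An edge `u = ab` of a tree splits the vertices into the side of `a` and the side of `b`.
For edges `x, y ≠ u`, every subtree containing `x` and `y` contains `u` exactly when `x` and `y`
lie on different sides, and single edges are subtrees; so `({x, y}, u)` is a rooted circuit
iff `x` and `y` are on different sides. With only two sides, if `y` and `z` are separated then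
`x` is separated from exactly one of them.
-/

section ClosureSystem

variable {E : Set α} {K : Set (Set α)} {X : Set α} {e : α}

theorem mem_closureOp : e ∈ closureOp K X ↔ ∀ A ∈ K, X ⊆ A → e ∈ A := by
  simp [closureOp, and_imp]

theorem notMem_closureOp_of_mem {A : Set α} (hA : A ∈ K) (hXA : X ⊆ A) (heA : e ∉ A) :
    e ∉ closureOp K X :=
  fun he => heA (mem_closureOp.mp he A hA hXA)

theorem isRootedCircuit_pair {x y : α} (hx : x ∈ E) (hy : y ∈ E) (he : e ∈ E)
    (hex : e ≠ x) (hey : e ≠ y) (hxK : {x} ∈ K) (hyK : {y} ∈ K)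
    (hxy : e ∈ closureOp K {x, y}) : IsRootedCircuit E K {x, y} e := by
  refine ⟨pair_subset hx hy, he, by simp [hex, hey], hxy, fun Y hY heY => ?_⟩
  have hx' : ¬Y ⊆ {x} := fun h => notMem_closureOp_of_mem hxK h hex heY
  have hy' : ¬Y ⊆ {y} := fun h => notMem_closureOp_of_mem hyK h hey heY
  rcases subset_pair_iff_eq.mp hY with rfl | rfl | rfl | rfl
  · exact absurd (empty_subset _) hx'
  · exact absurd subset_rfl hx'
  · exact absurd subset_rfl hy'
  · rfl

end ClosureSystem

namespace SimpleGraph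

variable {V : Type*} {G : SimpleGraph V} {a b c d e f : V}

theorem reachable_deleteEdges_or_of_adj {v w : V} (hvw : G.Adj v w)
    (hv : (G.deleteEdges {s(a, b)}).Reachable v a ∨ (G.deleteEdges {s(a, b)}).Reachable v b) :
    (G.deleteEdges {s(a, b)}).Reachable w a ∨ (G.deleteEdges {s(a, b)}).Reachable w b := by
  by_cases huv : s(v, w) = s(a, b)
  · rcases Sym2.eq_iff.mp huv with ⟨rfl, rfl⟩ | ⟨rfl, rfl⟩
    · exact Or.inr .rfl
    · exact Or.inl .rfl
  · have hvw' : (G.deleteEdges {s(a, b)}).Adj w v :=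
      deleteEdges_adj.mpr ⟨hvw.symm, by rwa [mem_singleton_iff, Sym2.eq_swap (a := w)]⟩
    exact hv.imp hvw'.reachable.trans hvw'.reachable.trans

theorem Walk.reachable_deleteEdges_or {v w : V} (p : G.Walk v w)
    (hv : (G.deleteEdges {s(a, b)}).Reachable v a ∨ (G.deleteEdges {s(a, b)}).Reachable v b) :
    (G.deleteEdges {s(a, b)}).Reachable w a ∨ (G.deleteEdges {s(a, b)}).Reachable w b := by
  induction p with
  | nil => exact hv
  | cons h _ ih => exact ih (reachable_deleteEdges_or_of_adj h hv)

theorem Preconnected.reachable_deleteEdges_or (hG : G.Preconnected) (v : V) :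
    (G.deleteEdges {s(a, b)}).Reachable v a ∨ (G.deleteEdges {s(a, b)}).Reachable v b :=
  (hG a v).elim fun p => p.reachable_deleteEdges_or (Or.inl .rfl)

theorem reachable_of_not_reachable_of_not_reachable {H : SimpleGraph V} {x y z : V}
    (hside : ∀ v, H.Reachable v a ∨ H.Reachable v b)
    (hxy : ¬H.Reachable x y) (hyz : ¬H.Reachable y z) : H.Reachable x z := by
  rcases hside x with hx | hx <;> rcases hside y with hy | hy <;> rcases hside z with hz | hz
  all_goals first
    | exact hx.trans hz.symm
    | exact absurd (hx.trans hy.symm) hxy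
    | exact absurd (hy.trans hz.symm) hyz

theorem xor_not_reachable {H : SimpleGraph V} {x y z : V}
    (hside : ∀ v, H.Reachable v a ∨ H.Reachable v b) (hyz : ¬H.Reachable y z) :
    Xor (¬H.Reachable x y) (¬H.Reachable x z) := by
  by_cases hxy : H.Reachable x y
  · exact Or.inr ⟨fun hxz => hyz (hxy.symm.trans hxz), not_not_intro hxy⟩
  · exact Or.inl ⟨hxy, not_not_intro (reachable_of_not_reachable_of_not_reachable hside hxy hyz)⟩

theorem singleton_mem_edgeShelling_s12 (h : G.Adj c d) : {s(c, d)} ∈ edgeShelling G :=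
  Or.inr ⟨G.subgraphOfAdj h, Subgraph.subgraphOfAdj_connected h, edgeSet_subgraphOfAdj h⟩

theorem mem_closureOp_pair_of_not_reachable
    (hce : ¬(G.deleteEdges {s(a, b)}).Reachable c e) :
    s(a, b) ∈ closureOp (edgeShelling G) {s(c, d), s(e, f)} := by
  refine mem_closureOp.mpr fun A hA hsub => ?_
  have hcd : s(c, d) ∈ A := hsub (mem_insert _ _)
  have hef : s(e, f) ∈ A := hsub (mem_insert_of_mem _ rfl)
  rcases hA with rfl | ⟨H, hH, rfl⟩
  · exact hcd.elim
  obtain ⟨p, hpH⟩ := (Subgraph.connected_iff_forall_exists_walk_subgraph H).mp hH |>.2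
    (H.edge_vert hcd) (H.edge_vert hef)
  exact Subgraph.edgeSet_mono hpH <|
    (Walk.mem_edges_toSubgraph p).mpr (p.mem_edges_of_not_reachable_deleteEdges hce)

theorem notMem_closureOp_pair_of_reachable (hcd : G.Adj c d) (hef : G.Adj e f)
    (hc : s(a, b) ≠ s(c, d)) (he : s(a, b) ≠ s(e, f))
    (hce : (G.deleteEdges {s(a, b)}).Reachable c e) :
    s(a, b) ∉ closureOp (edgeShelling G) {s(c, d), s(e, f)} := by
  obtain ⟨p, hp⟩ := reachable_deleteEdges_iff_exists_walk.mp hce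
  let q : G.Walk d f := .cons hcd.symm (p.concat hef)
  refine notMem_closureOp_of_mem (A := q.toSubgraph.edgeSet)
    (Or.inr ⟨_, q.toSubgraph_connected, rfl⟩) ?_ ?_
  · simp [q, pair_subset_iff, Sym2.eq_swap]
  · simp [q, Sym2.eq_swap, hp, hc, he]

theorem mem_closureOp_pair_iff (hcd : G.Adj c d) (hef : G.Adj e f)
    (hc : s(a, b) ≠ s(c, d)) (he : s(a, b) ≠ s(e, f)) :
    s(a, b) ∈ closureOp (edgeShelling G) {s(c, d), s(e, f)} ↔
      ¬(G.deleteEdges {s(a, b)}).Reachable c e :=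
  ⟨fun hmem hce => notMem_closureOp_pair_of_reachable hcd hef hc he hce hmem,
    mem_closureOp_pair_of_not_reachable⟩

theorem isRootedCircuit_edgeShelling_pair_iff (hab : G.Adj a b) (hcd : G.Adj c d)
    (hef : G.Adj e f) (hc : s(a, b) ≠ s(c, d)) (he : s(a, b) ≠ s(e, f)) :
    IsRootedCircuit G.edgeSet (edgeShelling G) {s(c, d), s(e, f)} s(a, b) ↔
      ¬(G.deleteEdges {s(a, b)}).Reachable c e := by
  rw [← mem_closureOp_pair_iff hcd hef hc he]
  exact ⟨fun h => h.2.2.2.1, isRootedCircuit_pair hcd hef hab hc he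
    (singleton_mem_edgeShelling_s12 hcd) (singleton_mem_edgeShelling_s12 hef)⟩

end SimpleGraph

open SimpleGraph in
theorem stmt12_general {V : Type*} (G : SimpleGraph V) (hG : G.IsTree) :
    RuleY G.edgeSet (edgeShelling G) := by
  intro x y z u hx hy hz hu _ _ hxu _ hyu hzu hyzu
  induction u using Sym2.ind with | _ a b => ?_
  induction x using Sym2.ind with | _ x₁ x₂ => ?_
  induction y using Sym2.ind with | _ y₁ y₂ => ?_
  induction z using Sym2.ind with | _ z₁ z₂ => ?_
  rw [isRootedCircuit_edgeShelling_pair_iff hu hy hz hyu.symm hzu.symm] at hyzu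
  rw [isRootedCircuit_edgeShelling_pair_iff hu hx hy hxu.symm hyu.symm,
    isRootedCircuit_edgeShelling_pair_iff hu hx hz hxu.symm hzu.symm]
  exact xor_not_reachable hG.connected.preconnected.reachable_deleteEdges_or hyzu

theorem stmt12 {V : Type*} [Fintype V] [Nonempty V] (G : SimpleGraph V) (hG : G.IsTree) :
    RuleY G.edgeSet (edgeShelling G) :=
  stmt12_general G hG
end

section
/- Let 𝒦 be a convex geometry of stem size 2 on a finite set E whose rooted circuits 𝒞 satisfy Rule Y. Let x, y ∈ E be distinct elements such that no rooted circuit (X, e) ∈ 𝒞 satisfies {x, y} ⊆ X ∪ {e}. Then for all distinct z, u ∈ E \ {x, y}: ({x,z}, u) ∈ 𝒞 if and only if ({y,z}, u) ∈ 𝒞. -/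
open Set

variable {α : Type*}

theorem stmt15 (E : Set α) (hE : E.Finite) (K : Set (Set α))
    (hK : IsConvexGeometry E K) (h2 : StemSize2 E K) (hY : RuleY E K)
    (x y : α) (hx : x ∈ E) (hy : y ∈ E) (hxy : x ≠ y)
    (hpar : ∀ (X : Set α) (e : α), IsRootedCircuit E K X e →
      ¬ ({x, y} : Set α) ⊆ X ∪ {e}) :
    ∀ z u : α, z ∈ E → u ∈ E → z ≠ u → z ≠ x → z ≠ y → u ≠ x → u ≠ y →
      (IsRootedCircuit E K {x, z} u ↔ IsRootedCircuit E K {y, z} u) := by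
  intro z u hz hu hzu hzx hzy hux huy
  have hxy' : ¬ IsRootedCircuit E K {x, y} u := fun h =>
    hpar _ _ h (by intro a ha; left; exact ha)
  have hyx' : ¬ IsRootedCircuit E K {y, x} u := by
    rw [Set.pair_comm]; exact hxy'
  constructor
  · intro h
    have := hY y x z u hy hx hz hu (Ne.symm hxy) hzy.symm huy.symm hzx.symm
      hux.symm hzu h
    rcases this with ⟨h1, _⟩ | ⟨h2, _⟩
    · exact absurd h1 hyx'
    · exact h2
  · intro h
    have := hY x y z u hx hy hz hu hxy hzx.symm hux.symm hzy.symm huy.symm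
      hzu h
    rcases this with ⟨h1, _⟩ | ⟨h2, _⟩
    · exact absurd h1 hxy'
    · exact h2
end
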